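/- arXiv:2002.02034 — 3 statements merged into one kernel-verified Lean document; each statement's English description precedes it below -/
import Mathlib

section
/- Let p be a prime and A an abelian group. Then for all a, b ∈ A, the element Δ(a+b) − Δ(a) − Δ(b) of the p-fold tensor power T = A ⊗_ℤ ⋯ ⊗_ℤ A lies in the image of the norm map N = ∑_{j=0}^{p−1} σ^j : T → T. -/
open scoped TensorProduct

/-- The `p`-fold tensor power `T = A ⊗_ℤ ⋯ ⊗_ℤ A` of an abelian group `A`. -/
noncomputable abbrev tensorPow (p : ℕ) (A : Type*) [AddCommGroup A] : Type _ :=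
  ⨂[ℤ] (_ : Fin p), A

/-- The automorphism `σ : T → T` permuting the tensor factors according to the cyclic
permutation `i ↦ i + 1` of `Fin p`. -/
noncomputable def cyclicPerm (p : ℕ) (A : Type*) [AddCommGroup A] :
    tensorPow p A →ₗ[ℤ] tensorPow p A :=
  (PiTensorProduct.reindex ℤ (fun _ : Fin p => A) (finRotate p)).toLinearMap

/-- The norm (transfer) map `N = ∑_{j=0}^{p-1} σ^j : T → T`. -/
noncomputable def normMap (p : ℕ) (A : Type*) [AddCommGroup A] :
    tensorPow p A →ₗ[ℤ] tensorPow p A :=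
  ∑ j ∈ Finset.range p, (cyclicPerm p A) ^ j

/-- `Δ(a) = a ⊗ a ⊗ ⋯ ⊗ a ∈ T`, the `p`-fold tensor power of the element `a`. -/
noncomputable def diagEl (p : ℕ) (A : Type*) [AddCommGroup A] (a : A) : tensorPow p A :=
  PiTensorProduct.tprod ℤ (fun _ : Fin p => a)

/-! Expanding multilinearly, `Δ(a + b) = ∑ₛ tₛ` over the subsets `s` of `Fin p`, where `tₛ` has
`a` in the slots of `s` and `b` in the others; `t_univ = Δ a`, `t_∅ = Δ b` and `σ tₛ = t_{1 + s}`.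
As `p` is prime, translation by `Fin p` acts freely on the nonempty proper subsets, so their sum
splits into whole orbits, and the sum of `tₛ` over the orbit of `s` is `N tₛ`. -/

open scoped Pointwise
open Finset

theorem AddAction.sum_eq_sum_quotient_sum_vadd_out {G α M : Type*} [AddGroup G] [Fintype G]
    [AddAction G α] [Fintype α] [Fintype (orbitRel.Quotient G α)] [AddCommMonoid M]
    (h : ∀ x : α, stabilizer G x = ⊥) (f : α → M) :
    ∑ x, f x = ∑ ω : orbitRel.Quotient G α, ∑ g : G, f (g +ᵥ ω.out) := by
  rw [← (selfEquivOrbitsQuotientProd h).symm.sum_comp, Fintype.sum_prod_type]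
  rfl

namespace Finset

theorem eq_empty_or_eq_univ_of_forall_vadd_eq {G : Type*} [AddGroup G] [Fintype G]
    [DecidableEq G] {s : Finset G} (h : ∀ g : G, g +ᵥ s = s) : s = ∅ ∨ s = univ := by
  refine s.eq_empty_or_nonempty.imp id fun ⟨x, hx⟩ => eq_univ_iff_forall.2 fun y => ?_
  simpa [h] using vadd_mem_vadd_finset (a := y - x) hx

theorem stabilizer_eq_bot_of_prime_card {G : Type*} [AddGroup G] [Fintype G] [DecidableEq G]
    (hG : (Nat.card G).Prime) {s : Finset G} (hs : s.Nonempty) (hs' : s ≠ univ) :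
    AddAction.stabilizer G s = ⊥ := by
  have := Fact.mk hG
  refine (AddAction.stabilizer G s).eq_bot_or_eq_top_of_prime_card.resolve_right fun htop => ?_
  have hfix (g : G) : g +ᵥ s = s := AddAction.mem_stabilizer_iff.1 (htop ▸ AddSubgroup.mem_top g)
  exact (eq_empty_or_eq_univ_of_forall_vadd_eq hfix).elim hs.ne_empty hs'

theorem piecewise_vadd_finset {G β : Type*} [AddCommGroup G] [DecidableEq G] (s : Finset G)
    (c : G) (a b : β) :
    ((c +ᵥ s).piecewise (fun _ => a) fun _ => b) =
      fun i => s.piecewise (fun _ => a) (fun _ => b) (i - c) := by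
  funext i
  simp only [piecewise, ← neg_vadd_mem_iff, vadd_eq_add, neg_add_eq_sub]

variable (G α : Type*) [AddGroup G] [AddAction G α] [Fintype α] [DecidableEq α]

def nonemptyProper : SubAddAction G (Finset α) where
  carrier := {s | s.Nonempty ∧ s ≠ univ}
  vadd_mem' g {s} hs := ⟨hs.1.vadd_finset, fun h => hs.2 <| by
    rw [← neg_vadd_vadd g s, h, vadd_finset_univ]⟩

variable {G α}

theorem mem_nonemptyProper {s : Finset α} :
    s ∈ nonemptyProper G α ↔ s.Nonempty ∧ s ≠ univ :=
  Iff.rfl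

theorem sum_nonemptyProper [Nonempty α] [Fintype (nonemptyProper G α)] {M : Type*}
    [AddCommGroup M] (f : Finset α → M) :
    ∑ s : nonemptyProper G α, f s = ∑ s, f s - f univ - f ∅ := by
  rw [← sum_subtype ((univ.erase univ).erase ∅) fun s => by
      simp [mem_nonemptyProper, nonempty_iff_ne_empty, and_comm],
    sum_erase_eq_sub (mem_erase.2 ⟨univ_nonempty.ne_empty.symm, mem_univ _⟩),
    sum_erase_eq_sub (mem_univ _)]

end Finset

section TensorPower

variable {A : Type*} [AddCommGroup A]

theorem cyclicPerm_tprod {p : ℕ} [NeZero p] (x : Fin p → A) :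
    cyclicPerm p A (⨂ₜ[ℤ] i, x i) = ⨂ₜ[ℤ] i, x (i - 1) := by
  simp [cyclicPerm, PiTensorProduct.reindex_tprod, finRotate_symm_apply]

open Fin.NatCast in
theorem cyclicPerm_pow_tprod {p : ℕ} [NeZero p] (x : Fin p → A) (j : ℕ) :
    (cyclicPerm p A ^ j) (⨂ₜ[ℤ] i, x i) = ⨂ₜ[ℤ] i, x (i - j) := by
  induction j with
  | zero => simp
  | succ j ih => simp [pow_succ', ih, cyclicPerm_tprod, sub_sub, add_comm]

open Fin.NatCast in
theorem normMap_tprod {p : ℕ} [NeZero p] (x : Fin p → A) :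
    normMap p A (⨂ₜ[ℤ] i, x i) = ∑ c : Fin p, ⨂ₜ[ℤ] i, x (i - c) := by
  rw [normMap, LinearMap.sum_apply, ← Fin.sum_univ_eq_sum_range]
  simp only [cyclicPerm_pow_tprod, Fin.cast_val_eq_self]

theorem diagEl_add (p : ℕ) (a b : A) :
    diagEl p A (a + b) = ∑ s : Finset (Fin p), ⨂ₜ[ℤ] i, s.piecewise (fun _ => a) (fun _ => b) i :=
  (PiTensorProduct.tprod ℤ).map_add_univ (fun _ => a) (fun _ => b)

end TensorPower

/-- For a prime `p` and an abelian group `A`, the element `Δ(a+b) − Δ(a) − Δ(b)` of the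
`p`-fold tensor power `T = A ⊗_ℤ ⋯ ⊗_ℤ A` lies in the image of the norm map
`N = ∑_{j=0}^{p−1} σ^j : T → T`. -/
theorem diag_add_sub_mem_norm_image (p : ℕ) (hp : p.Prime) (A : Type*) [AddCommGroup A]
    (a b : A) :
    ∃ x : tensorPow p A,
      normMap p A x = diagEl p A (a + b) - diagEl p A a - diagEl p A b := by
  classical
  have : NeZero p := ⟨hp.ne_zero⟩
  let t (s : Finset (Fin p)) : tensorPow p A := ⨂ₜ[ℤ] i, s.piecewise (fun _ => a) (fun _ => b) i
  let S := nonemptyProper (Fin p) (Fin p)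
  have hfree (s : S) : AddAction.stabilizer (Fin p) s = ⊥ := by
    rw [SubAddAction.stabilizer_of_subAdd]
    exact stabilizer_eq_bot_of_prime_card (by simpa using hp) (mem_nonemptyProper.1 s.2).1
      (mem_nonemptyProper.1 s.2).2
  refine ⟨∑ ω : AddAction.orbitRel.Quotient (Fin p) S, t ω.out, ?_⟩
  calc normMap p A (∑ ω : AddAction.orbitRel.Quotient (Fin p) S, t ω.out)
      = ∑ ω : AddAction.orbitRel.Quotient (Fin p) S, ∑ c : Fin p, t ↑(c +ᵥ ω.out) := by
        simp only [t, map_sum, normMap_tprod, SubAddAction.val_vadd, piecewise_vadd_finset]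
    _ = ∑ s : S, t s := (AddAction.sum_eq_sum_quotient_sum_vadd_out hfree (fun s : S => t s)).symm
    _ = ∑ s, t s - t univ - t ∅ := sum_nonemptyProper t
    _ = _ := by rw [diagEl_add]; simp [t, diagEl]
end

section
/- Let p be a prime and A an abelian group. Then Δ(a) lies in the σ-invariant subgroup T^σ = {x ∈ T : σx = x} for every a ∈ A, the image N(T) of the norm map is contained in T^σ, and the map A → T^σ / N(T) sending a to the class of Δ(a) is a homomorphism of abelian groups (the algebraic Tate-valued Frobenius, with target the Tate cohomology group Ĥ^0(C_p; A^{⊗p})). -/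
open scoped TensorProduct

/-- The subgroup `T^σ = {x ∈ T : σ x = x}` of `σ`-invariants. -/
noncomputable def invariants (p : ℕ) (A : Type*) [AddCommGroup A] :
    Submodule ℤ (tensorPow p A) :=
  LinearMap.ker (cyclicPerm p A - LinearMap.id)

/-- The image `N(T)` of the norm map, viewed inside the invariants `T^σ`. -/
noncomputable def normImageIn (p : ℕ) (A : Type*) [AddCommGroup A] :
    Submodule ℤ (invariants p A) :=
  (LinearMap.range (normMap p A)).comap (invariants p A).subtype

/-! The multilinear expansion of `Δ(a + b)` is a sum of pure tensors indexed by the subsets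
`S ⊆ Fin p` of positions carrying `a`; `S = univ` and `S = ∅` give `Δ(a)` and `Δ(b)`, and `σ`
maps the term of `S` to the term of the rotated subset. The rotations form a group of prime
order `p`, and a `p`-cycle fixes no proper nonempty subset, so this group acts freely on the
remaining subsets. Their sum therefore splits into orbit sums, each of which is `N` of a single
term. -/

open scoped Pointwise
open Finset

theorem Finset.sum_mem_of_sum_smul_mem {G X M S : Type*} [Group G] [Fintype G]
    [MulAction G X] [AddCommMonoid M] [SetLike S M] [AddSubmonoidClass S M] {P : S}
    {s : Finset X} (hs : ∀ g : G, ∀ x ∈ s, g • x ∈ s)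
    (hfree : ∀ x ∈ s, MulAction.stabilizer G x = ⊥) (f : X → M)
    (hP : ∀ x ∈ s, ∑ g : G, f (g • x) ∈ P) : ∑ x ∈ s, f x ∈ P := by
  classical
  let q : X → MulAction.orbitRel.Quotient G X := Quotient.mk _
  rw [← sum_fiberwise_of_maps_to (t := s.image q) fun x hx => mem_image_of_mem q hx]
  refine sum_mem fun ω hω => ?_
  obtain ⟨x, hx, rfl⟩ := mem_image.mp hω
  have hfiber : {y ∈ s | q y = q x} = univ.image ((· • x) : G → X) := by
    ext y
    simp only [mem_filter, mem_image, mem_univ, true_and, q, Quotient.eq,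
      MulAction.orbitRel_apply, MulAction.mem_orbit_iff]
    exact ⟨fun ⟨_, horb⟩ => horb, fun ⟨g, hg⟩ => ⟨hg ▸ hs g x hx, g, hg⟩⟩
  rw [hfiber, sum_image fun g _ h _ hgh => ?_]
  · exact hP x hx
  · have hstab : h⁻¹ * g ∈ MulAction.stabilizer G x := by
      rw [MulAction.mem_stabilizer_iff, mul_smul, hgh, inv_smul_smul]
    rw [hfree x hx, Subgroup.mem_bot, inv_mul_eq_one] at hstab
    exact hstab.symm

theorem IsOfFinOrder.sum_zpowers {G M : Type*} [Group G] [AddCommMonoid M] {x : G}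
    (hx : IsOfFinOrder x) [Fintype (Subgroup.zpowers x)] (F : G → M) :
    ∑ g : Subgroup.zpowers x, F g = ∑ j ∈ range (orderOf x), F (x ^ j) := by
  rw [← (finEquivZPowers hx).sum_comp, ← Fin.sum_univ_eq_sum_range]
  rfl

theorem PiTensorProduct.reindex_tprod_piecewise {ι R M : Type*} [DecidableEq ι] [CommSemiring R]
    [AddCommMonoid M] [Module R M] (e : Equiv.Perm ι) (S : Finset ι) (a b : M) :
    reindex R (fun _ => M) e (tprod R (S.piecewise (fun _ => a) (fun _ => b)))
      = tprod R ((e • S).piecewise (fun _ => a) (fun _ => b)) := by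
  rw [reindex_tprod]
  congr 1
  funext i
  by_cases hi : i ∈ e • S
  · rw [piecewise_eq_of_mem _ _ _ hi]
    exact piecewise_eq_of_mem _ _ _ (inv_smul_mem_iff.mpr hi)
  · rw [piecewise_eq_of_notMem _ _ _ hi]
    exact piecewise_eq_of_notMem _ _ _ fun h => hi (inv_smul_mem_iff.mp h)

theorem orderOf_finRotate_of_le {n : ℕ} (hn : 2 ≤ n) : orderOf (finRotate n) = n := by
  rw [(isCycle_finRotate_of_le hn).orderOf, support_finRotate_of_le hn, card_univ,
    Fintype.card_fin]

theorem finRotate_pow_self (n : ℕ) : finRotate n ^ n = 1 := by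
  rcases Nat.lt_or_ge n 2 with hn | hn
  · interval_cases n
    · exact Subsingleton.elim _ _
    · rw [finRotate_one, ← Equiv.Perm.one_def, one_pow]
  · have := pow_orderOf_eq_one (finRotate n)
    rwa [orderOf_finRotate_of_le hn] at this

theorem Equiv.Perm.IsCycle.eq_empty_or_eq_univ_of_smul_eq {α : Type*} [Fintype α]
    [DecidableEq α] {c : Equiv.Perm α} (hc : c.IsCycle) (hsupp : c.support = univ) {S : Finset α}
    (hS : c • S = S) : S = ∅ ∨ S = univ := by
  refine or_iff_not_imp_left.mpr fun hne => eq_univ_of_forall fun j => ?_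
  obtain ⟨i, hi⟩ := nonempty_iff_ne_empty.mpr hne
  obtain ⟨k, rfl⟩ := hc.exists_pow_eq (Equiv.Perm.mem_support.mp (hsupp ▸ mem_univ i))
    (Equiv.Perm.mem_support.mp (hsupp ▸ mem_univ j))
  have hstab : c ^ k ∈ MulAction.stabilizer (Equiv.Perm α) S := Subgroup.pow_mem _ hS k
  rw [← hstab]
  exact smul_mem_smul_finset hi

theorem stabilizer_zpowers_finRotate_eq_bot {p : ℕ} (hp : p.Prime) {S : Finset (Fin p)}
    (hS₀ : S ≠ ∅) (hSu : S ≠ univ) :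
    MulAction.stabilizer (Subgroup.zpowers (finRotate p)) S = ⊥ := by
  have : Fact (Nat.card (Subgroup.zpowers (finRotate p))).Prime :=
    ⟨by rwa [Nat.card_zpowers, orderOf_finRotate_of_le hp.two_le]⟩
  refine (Subgroup.eq_bot_or_eq_top_of_prime_card _).resolve_right fun htop => ?_
  have hrot :
      (⟨finRotate p, Subgroup.mem_zpowers _⟩ : Subgroup.zpowers (finRotate p)) • S = S :=
    MulAction.mem_stabilizer_iff.mp (htop ▸ Subgroup.mem_top _)
  exact ((isCycle_finRotate_of_le hp.two_le).eq_empty_or_eq_univ_of_smul_eq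
    (support_finRotate_of_le hp.two_le) hrot).elim hS₀ hSu

section

variable {p : ℕ} {A : Type*} [AddCommGroup A]

theorem cyclicPerm_pow (j : ℕ) :
    cyclicPerm p A ^ j
      = (PiTensorProduct.reindex ℤ (fun _ => A) (finRotate p ^ j)).toLinearMap := by
  induction j with
  | zero =>
    rw [pow_zero, pow_zero, Equiv.Perm.one_def, PiTensorProduct.reindex_refl]
    rfl
  | succ j ih =>
    rw [pow_succ, ih, cyclicPerm, pow_succ, Module.End.mul_eq_comp, ← LinearEquiv.coe_trans,
      PiTensorProduct.reindex_trans, Equiv.Perm.mul_def]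

theorem cyclicPerm_apply_diagEl (a : A) : cyclicPerm p A (diagEl p A a) = diagEl p A a := by
  simp [cyclicPerm, diagEl]

theorem cyclicPerm_pow_self : cyclicPerm p A ^ p = 1 := by
  rw [cyclicPerm_pow, finRotate_pow_self, Equiv.Perm.one_def, PiTensorProduct.reindex_refl]
  rfl

theorem cyclicPerm_normMap (x : tensorPow p A) :
    cyclicPerm p A (normMap p A x) = normMap p A x := by
  have hgeom : (cyclicPerm p A - 1) * normMap p A = 0 := by
    rw [normMap, mul_geom_sum, cyclicPerm_pow_self, sub_self]
  simpa [sub_eq_zero] using LinearMap.congr_fun hgeom x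

theorem diagEl_mem_invariants (a : A) : diagEl p A a ∈ invariants p A := by
  rw [invariants, LinearMap.mem_ker, LinearMap.sub_apply, cyclicPerm_apply_diagEl,
    LinearMap.id_apply, sub_self]

theorem diagEl_add_sub_mem_range_normMap (hp : p.Prime) (a b : A) :
    diagEl p A (a + b) - (diagEl p A a + diagEl p A b) ∈ LinearMap.range (normMap p A) := by
  classical
  let t : Finset (Fin p) → tensorPow p A :=
    fun S => PiTensorProduct.tprod ℤ (S.piecewise (fun _ => a) (fun _ => b))
  let proper : Finset (Finset (Fin p)) := univ \ {∅, univ}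
  have hsplit : diagEl p A (a + b) = (diagEl p A a + diagEl p A b) + ∑ S ∈ proper, t S := by
    have hne : (∅ : Finset (Fin p)) ≠ univ :=
      (univ_nonempty_iff.mpr ⟨⟨0, hp.pos⟩⟩).ne_empty.symm
    rw [diagEl, show (fun _ => a + b) = (fun _ => a) + (fun _ : Fin p => b) from rfl,
      MultilinearMap.map_add_univ, ← sum_sdiff (subset_univ {∅, univ}), sum_pair hne]
    simp only [piecewise_empty, piecewise_univ, diagEl, t, proper]
    abel
  rw [hsplit, add_sub_cancel_left]
  refine sum_mem_of_sum_smul_mem (G := Subgroup.zpowers (finRotate p)) (fun g S hS => ?_)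
    (fun S hS => ?_) t fun S _ => ?_
  · simp only [proper, mem_sdiff, mem_insert, mem_singleton, mem_univ, true_and] at hS ⊢
    rwa [Subgroup.smul_def, smul_finset_eq_empty, smul_finset_eq_univ]
  · simp only [proper, mem_sdiff, mem_insert, mem_singleton, mem_univ, true_and, not_or] at hS
    exact stabilizer_zpowers_finRotate_eq_bot hp hS.1 hS.2
  · simp only [Subgroup.smul_def]
    rw [(isOfFinOrder_of_finite (finRotate p)).sum_zpowers (fun σ => t (σ • S)),
      orderOf_finRotate_of_le hp.two_le]
    refine LinearMap.mem_range.mpr ⟨t S, ?_⟩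
    rw [normMap, LinearMap.sum_apply]
    refine sum_congr rfl fun j _ => ?_
    rw [cyclicPerm_pow, LinearEquiv.coe_coe, PiTensorProduct.reindex_tprod_piecewise]

end

/-- For a prime `p` and an abelian group `A`: `Δ(a)` lies in the `σ`-invariant subgroup
`T^σ`, the image of the norm map is contained in `T^σ`, and the map
`A → T^σ / N(T)`, `a ↦ [Δ(a)]`, is a homomorphism of abelian groups (the algebraic
Tate-valued Frobenius, with target the Tate cohomology group `Ĥ⁰(C_p; A^{⊗p})`). -/
theorem tate_valued_frobenius_additive (p : ℕ) (hp : p.Prime) (A : Type*) [AddCommGroup A] :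
    (∀ a : A, cyclicPerm p A (diagEl p A a) = diagEl p A a) ∧
    (∀ x : tensorPow p A, cyclicPerm p A (normMap p A x) = normMap p A x) ∧
    ∃ hdiag : ∀ a : A, diagEl p A a ∈ invariants p A,
      ∀ a b : A,
        (Submodule.Quotient.mk ⟨diagEl p A (a + b), hdiag (a + b)⟩ :
            invariants p A ⧸ normImageIn p A)
          = Submodule.Quotient.mk ⟨diagEl p A a, hdiag a⟩
            + Submodule.Quotient.mk ⟨diagEl p A b, hdiag b⟩ := by
  refine ⟨cyclicPerm_apply_diagEl, cyclicPerm_normMap, diagEl_mem_invariants, fun a b => ?_⟩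
  rw [← Submodule.Quotient.mk_add, Submodule.Quotient.eq, normImageIn, Submodule.mem_comap]
  exact diagEl_add_sub_mem_range_normMap hp a b
end

section
/- Let k be a field and let (M_n)_{n ∈ ℤ} be a family of k-vector spaces equipped with injective k-linear maps u_n : M_n → M_{n+2}, such that M_n = 0 for all sufficiently small n. Regard M = ⊕_{n ∈ ℤ} M_n as a module over the polynomial ring k[u] (with u of degree 2 acting via the maps u_n). Then M is a free k[u]-module. More precisely, any family (e_i) of homogeneous elements of M whose images form a k-basis of M/uM is a k[u]-basis of M; in particular there is an isomorphism of graded k[u]-modules M ≅ k[u] ⊗_k (M/uM). -/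
/-!
A relation `∑ pᵢ • eᵢ = 0` reduces modulo `u` to `∑ pᵢ(0) • [eᵢ] = 0`, so `u` divides every `pᵢ`,
and since `u` is injective the relation can be divided by `u`; hence every `pᵢ` is divisible by
all powers of `u` and vanishes. For spanning, and for the grading of the isomorphism, a
homogeneous `x` of degree `n` is a `k`-combination of the `eᵢ` of degree `n` plus `u • y` with `y`
of degree `n - 2`, so an induction on the degree, starting below the bound, reaches every `Mₙ`.
-/

open scoped TensorProduct
open Polynomial

/-- The submodule `uM ⊆ M`: the image of multiplication by `u = X` (of degree 2). -/
noncomputable def uM (k : Type*) [Field k] (M : Type*) [AddCommGroup M]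
    [Module (Polynomial k) M] : Submodule (Polynomial k) M :=
  LinearMap.range (LinearMap.lsmul (Polynomial k) M (Polynomial.X : Polynomial k))

theorem Int.induction_of_lt_of_sub_two {P : ℤ → Prop} (n₀ : ℤ) (base : ∀ n < n₀, P n)
    (step : ∀ n, P (n - 2) → P n) (n : ℤ) : P n := by
  suffices ∀ m : ℕ, ∀ n, (n - n₀ + 2).toNat = m → P n from this _ n rfl
  intro m
  induction m using Nat.strong_induction_on with
  | _ m ih =>
    intro n hm
    by_cases hn : n < n₀
    · exact base n hn
    · exact step n (ih (n - 2 - n₀ + 2).toNat (by omega) (n - 2) rfl)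

section

variable {k : Type*} [Field k] {M : Type*} [AddCommGroup M] [Module k M]
  [Module k[X] M] [IsScalarTower k k[X] M] {ι : Type*} {e : ι → M}

theorem mk_smul_eq_coeff_zero_smul (p : k[X]) (x : M) :
    (Submodule.Quotient.mk (p • x) : M ⧸ uM k M) = p.coeff 0 • Submodule.Quotient.mk x := by
  have hX : (Submodule.Quotient.mk ((X : k[X]) • (p.divX • x)) : M ⧸ uM k M) = 0 :=
    (Submodule.Quotient.mk_eq_zero _).mpr ⟨p.divX • x, rfl⟩
  conv_lhs => rw [← X_mul_divX_add p, add_smul, mul_smul, ← algebraMap_eq, algebraMap_smul]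
  rw [Submodule.Quotient.mk_add, hX, zero_add, Submodule.Quotient.mk_smul]

theorem mk_linearCombination_eq (ℓ : ι →₀ k[X]) :
    (Submodule.Quotient.mk (Finsupp.linearCombination k[X] e ℓ) : M ⧸ uM k M) =
      Finsupp.linearCombination k (fun i => (Submodule.Quotient.mk (e i) : M ⧸ uM k M))
        (ℓ.mapRange (coeff · 0) (coeff_zero 0)) := by
  rw [Finsupp.linearCombination_apply, Finsupp.linearCombination_apply,
    Finsupp.sum_mapRange_index (by simp), Finsupp.sum, Finsupp.sum, ← Submodule.mkQ_apply,
    map_sum]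
  exact Finset.sum_congr rfl fun i _ => mk_smul_eq_coeff_zero_smul (ℓ i) (e i)

theorem exists_eq_X_smul_of_linearCombination_eq_zero
    (hinj : ∀ x : M, (X : k[X]) • x = 0 → x = 0)
    (hli : LinearIndependent k fun i => (Submodule.Quotient.mk (e i) : M ⧸ uM k M))
    {ℓ : ι →₀ k[X]} (hℓ : Finsupp.linearCombination k[X] e ℓ = 0) :
    ∃ ℓ' : ι →₀ k[X], ℓ = (X : k[X]) • ℓ' ∧ Finsupp.linearCombination k[X] e ℓ' = 0 := by
  have hcoeff : ℓ.mapRange (coeff · 0) (coeff_zero 0) = 0 :=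
    linearIndependent_iff.mp hli _ (by rw [← mk_linearCombination_eq, hℓ]; rfl)
  have hℓX : ℓ = (X : k[X]) • ℓ.mapRange divX divX_zero := by
    ext i
    have h0 : (ℓ i).coeff 0 = 0 := by simpa using DFunLike.congr_fun hcoeff i
    conv_lhs => rw [← X_mul_divX_add (ℓ i), h0, map_zero, add_zero]
    simp
  refine ⟨_, hℓX, hinj _ ?_⟩
  rw [← map_smul, ← hℓX, hℓ]

theorem linearIndependent_of_linearIndependent_mk_uM
    (hinj : ∀ x : M, (X : k[X]) • x = 0 → x = 0)
    (hli : LinearIndependent k fun i => (Submodule.Quotient.mk (e i) : M ⧸ uM k M)) :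
    LinearIndependent k[X] e := by
  have hdvd : ∀ m : ℕ, ∀ ℓ : ι →₀ k[X], Finsupp.linearCombination k[X] e ℓ = 0 →
      ∀ i, (X : k[X]) ^ m ∣ ℓ i := by
    intro m
    induction m with
    | zero => simp
    | succ m ih =>
      intro ℓ hℓ i
      obtain ⟨ℓ', rfl, hℓ'⟩ := exists_eq_X_smul_of_linearCombination_eq_zero hinj hli hℓ
      rw [pow_succ', Finsupp.smul_apply, smul_eq_mul]
      exact mul_dvd_mul_left X (ih ℓ' hℓ' i)
  refine linearIndependent_iff.mpr fun ℓ hℓ => Finsupp.ext fun i => ?_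
  refine eq_zero_of_dvd_of_natDegree_lt (hdvd ((ℓ i).natDegree + 1) ℓ hℓ i) ?_
  rw [natDegree_X_pow]
  exact Nat.lt_succ_self _

end

section

open DirectSum

variable {k : Type*} [Field k] {M : Type*} [AddCommGroup M] [Module k M]
  [Module k[X] M] {Mgr : ℤ → Submodule k M} [Decomposition Mgr]

theorem decompose_X_smul (hshift : ∀ n, ∀ x ∈ Mgr n, (X : k[X]) • x ∈ Mgr (n + 2))
    (y : M) (n : ℤ) :
    (decompose Mgr ((X : k[X]) • y) n : M) = (X : k[X]) • (decompose Mgr y (n - 2) : M) := by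
  induction y using Decomposition.inductionOn Mgr with
  | zero => simp
  | @homogeneous m y =>
    by_cases h : m + 2 = n
    · subst h
      rw [decompose_of_mem_same Mgr (hshift m y y.2), add_sub_cancel_right,
        decompose_of_mem_same Mgr y.2]
    · rw [decompose_of_mem_ne Mgr (hshift m y y.2) h,
        decompose_of_mem_ne Mgr y.2 (by omega), smul_zero]
  | add y y' hy hy' =>
    rw [smul_add, decompose_add, DirectSum.add_apply, Submodule.coe_add, hy, hy', decompose_add,
      DirectSum.add_apply, Submodule.coe_add, smul_add]

variable [IsScalarTower k k[X] M] {ι : Type*} {d : ι → ℤ} {e : ι → M}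

theorem exists_eq_add_X_smul (hshift : ∀ n, ∀ x ∈ Mgr n, (X : k[X]) • x ∈ Mgr (n + 2))
    (hhom : ∀ i, e i ∈ Mgr (d i))
    (hspan : Submodule.span k
      (Set.range fun i => (Submodule.Quotient.mk (e i) : M ⧸ uM k M)) = ⊤)
    {n : ℤ} {x : M} (hx : x ∈ Mgr n) :
    ∃ s ∈ Submodule.span k (e '' {i | d i = n}), ∃ y ∈ Mgr (n - 2),
      x = s + (X : k[X]) • y := by
  obtain ⟨s, hs, hsx⟩ :
      Submodule.Quotient.mk x ∈ (Submodule.span k (Set.range e)).map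
        ((uM k M).mkQ.restrictScalars k) := by
    rw [Submodule.map_span, ← Set.range_comp]
    exact hspan ▸ Submodule.mem_top
  obtain ⟨y, hy⟩ : x - s ∈ uM k M := (Submodule.Quotient.eq _).mp hsx.symm
  let π : M →ₗ[k] M := (Mgr n).subtype ∘ₗ component k ℤ (fun n => Mgr n) n ∘ₗ
    (decomposeLinearEquiv Mgr).toLinearMap
  have hπ : Submodule.span k (Set.range e) ≤ (Submodule.span k (e '' {i | d i = n})).comap π := by
    refine Submodule.span_le.mpr ?_
    rintro _ ⟨i, rfl⟩
    by_cases hi : d i = n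
    · exact Submodule.subset_span ⟨i, hi, (decompose_of_mem_same Mgr (hi ▸ hhom i)).symm⟩
    · change π (e i) ∈ Submodule.span k (e '' {j | d j = n})
      rw [show π (e i) = 0 from decompose_of_mem_ne Mgr (hhom i) hi]
      exact zero_mem _
  refine ⟨π s, hπ hs, decompose Mgr y (n - 2), SetLike.coe_mem _, ?_⟩
  calc x = decompose Mgr x n := (decompose_of_mem_same Mgr hx).symm
    _ = decompose Mgr (s + (X : k[X]) • y) n := by
      rw [LinearMap.lsmul_apply] at hy
      rw [hy, add_sub_cancel]
    _ = π s + (X : k[X]) • (decompose Mgr y (n - 2) : M) := by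
      rw [decompose_add, DirectSum.add_apply, Submodule.coe_add, decompose_X_smul hshift]
      rfl

theorem map_mem_of_forall_map_mem {N : Type*} [AddCommGroup N] [Module k N] [Module k[X] N]
    [IsScalarTower k k[X] N] (hshift : ∀ n, ∀ x ∈ Mgr n, (X : k[X]) • x ∈ Mgr (n + 2))
    (hhom : ∀ i, e i ∈ Mgr (d i))
    (hspan : Submodule.span k
      (Set.range fun i => (Submodule.Quotient.mk (e i) : M ⧸ uM k M)) = ⊤)
    {n₀ : ℤ} (hbdd : ∀ n < n₀, Mgr n = ⊥) (g : M →ₗ[k[X]] N) {T : ℤ → Submodule k N}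
    (hT : ∀ n, ∀ z ∈ T n, (X : k[X]) • z ∈ T (n + 2)) (hg : ∀ i, g (e i) ∈ T (d i))
    (n : ℤ) : ∀ x ∈ Mgr n, g x ∈ T n := by
  refine Int.induction_of_lt_of_sub_two (P := fun n => ∀ x ∈ Mgr n, g x ∈ T n) n₀
    (fun n hn x hx => ?_) (fun n ih x hx => ?_) n
  · rw [hbdd n hn, Submodule.mem_bot] at hx
    simp [hx]
  · obtain ⟨s, hs, y, hy, rfl⟩ := exists_eq_add_X_smul hshift hhom hspan hx
    rw [map_add, map_smul]
    refine add_mem ?_ (sub_add_cancel n 2 ▸ hT _ _ (ih y hy))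
    have hgs : Submodule.span k (e '' {i | d i = n}) ≤ (T n).comap (g.restrictScalars k) := by
      refine Submodule.span_le.mpr ?_
      rintro _ ⟨i, hi, rfl⟩
      exact hi ▸ hg i
    exact hgs hs

theorem span_range_eq_top_of_span_mk_uM_eq_top
    (hshift : ∀ n, ∀ x ∈ Mgr n, (X : k[X]) • x ∈ Mgr (n + 2))
    {n₀ : ℤ} (hbdd : ∀ n < n₀, Mgr n = ⊥) (hhom : ∀ i, e i ∈ Mgr (d i))
    (hspan : Submodule.span k
      (Set.range fun i => (Submodule.Quotient.mk (e i) : M ⧸ uM k M)) = ⊤) :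
    Submodule.span k[X] (Set.range e) = ⊤ := by
  have hgr : ∀ n, ∀ x ∈ Mgr n, x ∈ Submodule.span k[X] (Set.range e) :=
    map_mem_of_forall_map_mem (T := fun _ => (Submodule.span k[X] (Set.range e)).restrictScalars k)
      hshift hhom hspan hbdd LinearMap.id (fun _ _ hz => Submodule.smul_mem _ X hz)
      (fun i => Submodule.subset_span ⟨i, rfl⟩)
  refine Submodule.eq_top_iff'.mpr fun x => ?_
  induction x using Decomposition.inductionOn Mgr with
  | zero => exact zero_mem _
  | @homogeneous n x => exact hgr n x x.2
  | add x y hx hy => exact add_mem hx hy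

end

section

variable {k : Type*} [Field k] {M : Type*} [AddCommGroup M] [Module k M]
  [Module k[X] M] [IsScalarTower k k[X] M]

noncomputable def tensorGrade (Mgr : ℤ → Submodule k M) (n : ℤ) :
    Submodule k (k[X] ⊗[k] (M ⧸ uM k M)) :=
  Submodule.span k
    {z | ∃ (j : ℕ) (q : M ⧸ uM k M),
      q ∈ (Mgr (n - 2 * (j : ℤ))).map ((uM k M).mkQ.restrictScalars k) ∧
      z = (X ^ j : k[X]) ⊗ₜ[k] q}

variable {Mgr : ℤ → Submodule k M}

theorem X_smul_mem_tensorGrade {n : ℤ} {z : k[X] ⊗[k] (M ⧸ uM k M)}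
    (hz : z ∈ tensorGrade Mgr n) : (X : k[X]) • z ∈ tensorGrade Mgr (n + 2) := by
  have hX : tensorGrade Mgr n ≤ (tensorGrade Mgr (n + 2)).comap
      ((LinearMap.lsmul k[X] (k[X] ⊗[k] (M ⧸ uM k M)) X).restrictScalars k) := by
    refine Submodule.span_le.mpr ?_
    rintro _ ⟨j, q, hq, rfl⟩
    refine Submodule.subset_span ⟨j + 1, q, ?_, ?_⟩
    · convert hq using 3
      push_cast
      ring
    · rw [LinearMap.restrictScalars_apply, LinearMap.lsmul_apply, TensorProduct.smul_tmul',
        smul_eq_mul, pow_succ']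
  exact hX hz

theorem one_tmul_mk_mem_tensorGrade {n : ℤ} {x : M} (hx : x ∈ Mgr n) :
    (1 : k[X]) ⊗ₜ[k] (Submodule.Quotient.mk x : M ⧸ uM k M) ∈ tensorGrade Mgr n :=
  Submodule.subset_span ⟨0, _, ⟨x, by simpa using hx, rfl⟩, by rw [pow_zero]; rfl⟩

end

/-- Let `k` be a field and `M` a ℤ-graded module over `k[u]` with `u` of degree 2
(the grading given by a family of `k`-subspaces `Mgr n` forming an internal direct sum with
`u • Mgr n ⊆ Mgr (n+2)`), such that multiplication by `u` is injective (torsion-freeness)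
and `Mgr n = 0` for all sufficiently small `n` (boundedness below).  Then any family
`(e i)` of homogeneous elements of `M` whose images form a `k`-basis of `M/uM` is a
`k[u]`-basis of `M`; in particular `M` is a free `k[u]`-module and there is an isomorphism
of graded `k[u]`-modules `M ≅ k[u] ⊗_k (M/uM)` (where `X^j ⊗ (M/uM)_i` sits in
degree `i + 2j`). -/
theorem free_over_ku_of_torsionFree_boundedBelow
    (k : Type*) [Field k] (M : Type*) [AddCommGroup M] [Module k M]
    [Module (Polynomial k) M] [IsScalarTower k (Polynomial k) M]
    (Mgr : ℤ → Submodule k M)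
    (hinternal : DirectSum.IsInternal Mgr)
    (hshift : ∀ (n : ℤ), ∀ x ∈ Mgr n, (Polynomial.X : Polynomial k) • x ∈ Mgr (n + 2))
    (hinj : ∀ x : M, (Polynomial.X : Polynomial k) • x = 0 → x = 0)
    (hbdd : ∃ n₀ : ℤ, ∀ n < n₀, Mgr n = ⊥)
    (ι : Type*) (d : ι → ℤ) (e : ι → M)
    (hhom : ∀ i, e i ∈ Mgr (d i))
    (hli : LinearIndependent k
      (fun i : ι => (Submodule.Quotient.mk (e i) : M ⧸ uM k M)))
    (hspan : Submodule.span k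
      (Set.range fun i : ι => (Submodule.Quotient.mk (e i) : M ⧸ uM k M)) = ⊤) :
    LinearIndependent (Polynomial k) e ∧
    Submodule.span (Polynomial k) (Set.range e) = ⊤ ∧
    Module.Free (Polynomial k) M ∧
    ∃ f : M ≃ₗ[Polynomial k] (Polynomial k ⊗[k] (M ⧸ uM k M)),
      ∀ (n : ℤ) (x : M), x ∈ Mgr n →
        f x ∈ Submodule.span k
          {z : Polynomial k ⊗[k] (M ⧸ uM k M) |
            ∃ (j : ℕ) (q : M ⧸ uM k M),
              q ∈ (Mgr (n - 2 * (j : ℤ))).map ((uM k M).mkQ.restrictScalars k) ∧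
              z = (Polynomial.X ^ j : Polynomial k) ⊗ₜ[k] q} := by
  obtain ⟨n₀, hbdd⟩ := hbdd
  let := hinternal.chooseDecomposition
  have hLI := linearIndependent_of_linearIndependent_mk_uM hinj hli
  have hSpan := span_range_eq_top_of_span_mk_uM_eq_top hshift hbdd hhom hspan
  let bE := Module.Basis.mk hLI hSpan.ge
  let bT := Algebra.TensorProduct.basis k[X] (Module.Basis.mk hli hspan.ge)
  let f := bE.equiv bT (Equiv.refl ι)
  refine ⟨hLI, hSpan, .of_basis bE, f, map_mem_of_forall_map_mem hshift hhom hspan hbdd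
    f.toLinearMap (T := tensorGrade Mgr) (fun _ _ => X_smul_mem_tensorGrade) fun i => ?_⟩
  convert one_tmul_mk_mem_tensorGrade (hhom i)
  simpa [bE, bT] using bE.equiv_apply i bT (Equiv.refl ι)
end
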